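/- Let X be a subtree of a complete binary tree T. For any subset S of the internal nodes of X, the number of nodes of X lying in the node boundary of S satisfies |∂S ∩ V_X| ≥ |S ∩ V_X|; moreover, if S is nonempty then |∂S ∩ V_X| ≥ |S ∩ V_X| + 1. -/

import Mathlib

/-- Vertices of the complete binary tree of height `h`: lists of booleans of
length at most `h`, recorded from the vertex up to the root (so the root is `[]`,
and a child of `v` is `b :: v` for a bit `b`). The depth of a vertex is the
length of its list. -/
def CBTVert (h : ℕ) : Type := {l : List Bool // l.length ≤ h}

/-- The complete binary tree of height `h` as a simple graph: `u` and `v` are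
adjacent iff one is a child of the other. -/
def cbt (h : ℕ) : SimpleGraph (CBTVert h) where
  Adj u v := (∃ b, u.1 = b :: v.1) ∨ (∃ b, v.1 = b :: u.1)
  symm := by constructor; intro u v hv; tauto
  loopless := by
    constructor
    rintro u (⟨b, hb⟩ | ⟨b, hb⟩) <;>
      simpa using congrArg List.length hb

/-- The node boundary of a set `S`: vertices outside `S` adjacent to some vertex of `S`. -/
def nbd {V : Type*} (G : SimpleGraph V) (S : Set V) : Set V :=
  {v | v ∉ S ∧ ∃ u ∈ S, G.Adj u v}

/-- Leaves are the vertices of maximal depth (the tree is complete). -/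
def isLeaf {h : ℕ} (v : CBTVert h) : Prop := v.1.length = h

/-- Internal nodes are the non-leaf vertices. -/
def isInternal {h : ℕ} (v : CBTVert h) : Prop := v.1.length < h

/-- The root of the complete binary tree. -/
def root (h : ℕ) : CBTVert h := ⟨[], by simp⟩

/-- `desc x v` means `v` belongs to the subtree rooted at `x`
(`x`'s list is a suffix of `v`'s list). -/
def desc {h : ℕ} (x v : CBTVert h) : Prop := x.1 <:+ v.1

/-- The subtree rooted at `x` is `S`-occupied if all its leaves belong to `S`. -/
def occupied {h : ℕ} (S : Set (CBTVert h)) (x : CBTVert h) : Prop :=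
  ∀ v : CBTVert h, desc x v → isLeaf v → v ∈ S

/-- The subtree rooted at `x` is a maximal `S`-occupied subtree. -/
def maxOccupied {h : ℕ} (S : Set (CBTVert h)) (x : CBTVert h) : Prop :=
  occupied S x ∧ ∀ y, desc y x → occupied S y → y = x

/-!
Every internal node of `S` has two children, so `S` has `2 |S|` children in total. A child lying in
`S` again has its parent in `S`, so a node of `S` of minimal depth is not among them: at most
`|S| - 1` children of `S` are in `S`. The remaining `|S| + 1` children lie in the boundary of `S`,
and they stay inside every subtree containing `S`.
-/

namespace CBTVert

variable {h : ℕ}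

instance : Finite (CBTVert h) :=
  (List.finite_length_le Bool h).to_subtype

/-- The child `b :: v` of `v`; junk value `v` when `v` is a leaf. -/
def child (b : Bool) (v : CBTVert h) : CBTVert h :=
  if hv : v.1.length < h then ⟨b :: v.1, hv⟩ else v

lemma child_val {v : CBTVert h} (hv : isInternal v) (b : Bool) : (child b v).1 = b :: v.1 := by
  simp [child, show v.1.length < h from hv]

def children (S : Set (CBTVert h)) : Set (CBTVert h) :=
  (fun p : Bool × CBTVert h => child p.1 p.2) '' (Set.univ ×ˢ S)

lemma exists_parent_of_mem_children {S : Set (CBTVert h)} (hS : ∀ v ∈ S, isInternal v)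
    {u : CBTVert h} (hu : u ∈ children S) : ∃ v ∈ S, ∃ b, u.1 = b :: v.1 := by
  obtain ⟨⟨b, v⟩, ⟨-, hv⟩, rfl⟩ := hu
  exact ⟨v, hv, b, child_val (hS v hv) b⟩

lemma ncard_children {S : Set (CBTVert h)} (hS : ∀ v ∈ S, isInternal v) :
    (children S).ncard = 2 * S.ncard := by
  have hinj : Set.InjOn (fun p : Bool × CBTVert h => child p.1 p.2) (Set.univ ×ˢ S) := by
    rintro ⟨b, v⟩ ⟨-, hv⟩ ⟨c, w⟩ ⟨-, hw⟩ hvw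
    have := congrArg Subtype.val hvw
    simp only [child_val (hS v hv), child_val (hS w hw), List.cons.injEq] at this
    exact Prod.ext this.1 (Subtype.ext this.2)
  rw [children, hinj.ncard_image, Set.ncard_prod, Set.ncard_univ, Nat.card_eq_fintype_card,
    Fintype.card_bool]

lemma ncard_children_inter_lt {S : Set (CBTVert h)} (hS : ∀ v ∈ S, isInternal v)
    (hne : S.Nonempty) : (children S ∩ S).ncard < S.ncard := by
  obtain ⟨m, hmS, hmin⟩ := Set.exists_min_image S (fun v => v.1.length) S.toFinite hne
  have hm : m ∉ children S := by
    intro hm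
    obtain ⟨v, hv, b, hb⟩ := exists_parent_of_mem_children hS hm
    have := hmin v hv
    simp only [hb, List.length_cons] at this
    omega
  exact Set.ncard_lt_ncard ⟨Set.inter_subset_right, fun hsub => hm (hsub hmS).1⟩ S.toFinite

lemma children_diff_subset_nbd {S : Set (CBTVert h)} (hS : ∀ v ∈ S, isInternal v) :
    children S \ S ⊆ nbd (cbt h) S := by
  rintro u ⟨hu, huS⟩
  obtain ⟨v, hv, b, hb⟩ := exists_parent_of_mem_children hS hu
  exact ⟨huS, v, hv, Or.inr ⟨b, hb⟩⟩

lemma children_subset_desc {S : Set (CBTVert h)} (hS : ∀ v ∈ S, isInternal v) {x : CBTVert h}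
    (hx : S ⊆ {v | desc x v}) : children S ⊆ {v | desc x v} := by
  intro u hu
  obtain ⟨v, hv, b, hb⟩ := exists_parent_of_mem_children hS hu
  exact (hx hv).trans (hb ▸ List.suffix_cons b v.1)

lemma ncard_lt_ncard_nbd_inter {S D : Set (CBTVert h)} (hS : ∀ v ∈ S, isInternal v)
    (hne : S.Nonempty) (hD : children S ⊆ D) : S.ncard < (nbd (cbt h) S ∩ D).ncard := by
  have hsub : children S \ S ⊆ nbd (cbt h) S ∩ D :=
    Set.subset_inter (children_diff_subset_nbd hS) (Set.sdiff_subset.trans hD)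
  have := Set.ncard_le_ncard hsub (Set.toFinite _)
  have := Set.ncard_inter_add_ncard_sdiff_eq_ncard (children S) S
  have := ncard_children hS
  have := ncard_children_inter_lt hS hne
  omega

end CBTVert

open CBTVert in
/-- Corollary 1: for a subtree X of T (rooted at x) and any set S of internal
nodes of X, the part of the node boundary of S inside X is at least as large
as S ∩ V_X, and strictly larger if S is nonempty. -/
theorem stmt2 (h : ℕ) (x : CBTVert h) (S : Set (CBTVert h))
    (hS : S ⊆ {v | desc x v ∧ isInternal v}) :
    (nbd (cbt h) S ∩ {v | desc x v}).ncard ≥ (S ∩ {v | desc x v}).ncard ∧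
      (S.Nonempty →
        (nbd (cbt h) S ∩ {v | desc x v}).ncard ≥ (S ∩ {v | desc x v}).ncard + 1) := by
  have hint : ∀ v ∈ S, isInternal v := fun v hv => (hS hv).2
  have hdesc : S ⊆ {v | desc x v} := fun v hv => (hS hv).1
  have key : S.Nonempty → S.ncard < (nbd (cbt h) S ∩ {v | desc x v}).ncard := fun hne =>
    ncard_lt_ncard_nbd_inter hint hne (children_subset_desc hint hdesc)
  rw [Set.inter_eq_self_of_subset_left hdesc]
  refine ⟨?_, key⟩
  rcases S.eq_empty_or_nonempty with rfl | hne
  · simp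
  · exact (key hne).le
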